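/- Let μ(z) := (z+1)/(z−1) for z ≠ 1, let RHP := {z ∈ ℂ : Re z > 0}, and define ν : RHP → ℂ by ν(z) = z if |arg z| ≤ π/4, ν(z) = |z|·e^{i(3·arg z − π/2)} if π/4 < arg z < π/2, and ν(z) = |z|·e^{i(3·arg z + π/2)} if −π/2 < arg z < −π/4. Define σ := μ ∘ ν ∘ μ on Ω := {z ∈ ℂ : |z| > 1} (this is well-defined: μ maps Ω into RHP \ {1}, and ν(w) ≠ 1 fails only at w = 1). Then σ is a homeomorphism from Ω onto ℂ \ [−1, 1], where [−1,1] denotes the closed real interval regarded as a subset of ℂ. -/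

import Mathlib

open Complex Set Real

/-- The Möbius transformation `μ(z) := (z+1)/(z−1)`. -/
noncomputable def mu (z : ℂ) : ℂ := (z + 1) / (z - 1)

/-- The angle-tripling map `ν` on the right half-plane: `ν(z) = z` if `|arg z| ≤ π/4`,
`ν(z) = |z|·e^{i(3·arg z − π/2)}` if `arg z > π/4`, and
`ν(z) = |z|·e^{i(3·arg z + π/2)}` if `arg z < −π/4`. -/
noncomputable def nuMap (z : ℂ) : ℂ :=
  if |Complex.arg z| ≤ Real.pi / 4 then z
  else if 0 < Complex.arg z then
    (‖z‖ : ℂ) * Complex.exp (Complex.I * ((3 * Complex.arg z - Real.pi / 2 : ℝ) : ℂ))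
  else
    (‖z‖ : ℂ) * Complex.exp (Complex.I * ((3 * Complex.arg z + Real.pi / 2 : ℝ) : ℂ))

/-- `σ := μ ∘ ν ∘ μ`. -/
noncomputable def sigmaMap (z : ℂ) : ℂ := mu (nuMap (mu z))

/-! ### The angle-tripling map on arguments -/

noncomputable def fA (θ : ℝ) : ℝ :=
  θ + 2 * max (θ - Real.pi / 4) 0 + 2 * min (θ + Real.pi / 4) 0

noncomputable def gA (t : ℝ) : ℝ :=
  t - 2/3 * max (t - Real.pi / 4) 0 - 2/3 * min (t + Real.pi / 4) 0

lemma fA_cont : Continuous fA := by unfold fA; fun_prop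

lemma gA_cont : Continuous gA := by unfold gA; fun_prop

lemma fA_mono : StrictMono fA := by
  intro a b h
  have h1 : max (a - Real.pi/4) 0 ≤ max (b - Real.pi/4) 0 := max_le_max (by linarith) le_rfl
  have h2 : min (a + Real.pi/4) 0 ≤ min (b + Real.pi/4) 0 := min_le_min (by linarith) le_rfl
  unfold fA; linarith

lemma gA_fA (θ : ℝ) : gA (fA θ) = θ := by
  have hπ := Real.pi_pos
  rcases le_or_gt θ (-(Real.pi/4)) with h | h
  · have e1 : fA θ = 3*θ + Real.pi/2 := by
      unfold fA
      rw [max_eq_right (by linarith), min_eq_left (by linarith)]; ring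
    unfold gA
    rw [e1, max_eq_right (by linarith), min_eq_left (by linarith)]; ring
  rcases le_or_gt θ (Real.pi/4) with h2 | h2
  · have e1 : fA θ = θ := by
      unfold fA
      rw [max_eq_right (by linarith), min_eq_right (by linarith)]; ring
    unfold gA
    rw [e1, max_eq_right (by linarith), min_eq_right (by linarith)]; ring
  · have e1 : fA θ = 3*θ - Real.pi/2 := by
      unfold fA
      rw [max_eq_left (by linarith), min_eq_right (by linarith)]; ring
    unfold gA
    rw [e1, max_eq_left (by linarith), min_eq_right (by linarith)]; ring

lemma fA_gA (t : ℝ) : fA (gA t) = t := by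
  have hπ := Real.pi_pos
  rcases le_or_gt t (-(Real.pi/4)) with h | h
  · have e1 : gA t = t/3 - Real.pi/6 := by
      unfold gA
      rw [max_eq_right (by linarith), min_eq_left (by linarith)]; ring
    unfold fA
    rw [e1, max_eq_right (by linarith), min_eq_left (by linarith)]; ring
  rcases le_or_gt t (Real.pi/4) with h2 | h2
  · have e1 : gA t = t := by
      unfold gA
      rw [max_eq_right (by linarith), min_eq_right (by linarith)]; ring
    unfold fA
    rw [e1, max_eq_right (by linarith), min_eq_right (by linarith)]; ring
  · have e1 : gA t = t/3 + Real.pi/6 := by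
      unfold gA
      rw [max_eq_left (by linarith), min_eq_right (by linarith)]; ring
    unfold fA
    rw [e1, max_eq_left (by linarith), min_eq_right (by linarith)]; ring

lemma fA_neg_half : fA (-(Real.pi/2)) = -Real.pi := by
  have hπ := Real.pi_pos
  unfold fA
  rw [max_eq_right (by linarith), min_eq_left (by linarith)]; ring

lemma fA_half : fA (Real.pi/2) = Real.pi := by
  have hπ := Real.pi_pos
  unfold fA
  rw [max_eq_left (by linarith), min_eq_right (by linarith)]; ring

lemma fA_mem {θ : ℝ} (h : θ ∈ Ioo (-(Real.pi/2)) (Real.pi/2)) :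
    fA θ ∈ Ioo (-Real.pi) Real.pi :=
  ⟨by rw [← fA_neg_half]; exact fA_mono h.1, by rw [← fA_half]; exact fA_mono h.2⟩

lemma gA_mem {t : ℝ} (h : t ∈ Ioo (-Real.pi) Real.pi) :
    gA t ∈ Ioo (-(Real.pi/2)) (Real.pi/2) := by
  constructor
  · have := fA_mono.lt_iff_lt (a := -(Real.pi/2)) (b := gA t)
    rw [fA_neg_half, fA_gA] at this; exact this.mp h.1
  · have := fA_mono.lt_iff_lt (a := gA t) (b := Real.pi/2)
    rw [fA_half, fA_gA] at this; exact this.mp h.2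

lemma fA_zero : fA 0 = 0 := by
  have hπ := Real.pi_pos
  unfold fA
  rw [max_eq_right (by linarith), min_eq_right (by linarith)]; ring

lemma gA_zero : gA 0 = 0 := by
  conv_lhs => rw [← fA_zero]
  exact gA_fA 0

/-! ### The maps in closed polar form -/

noncomputable def Nmap (z : ℂ) : ℂ :=
  (‖z‖ : ℂ) * Complex.exp (Complex.I * (fA (Complex.arg z) : ℂ))

noncomputable def Mmap (w : ℂ) : ℂ :=
  (‖w‖ : ℂ) * Complex.exp (Complex.I * (gA (Complex.arg w) : ℂ))

lemma nuMap_eq_Nmap (z : ℂ) : nuMap z = Nmap z := by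
  have hπ := Real.pi_pos
  unfold nuMap Nmap
  rcases le_or_gt |Complex.arg z| (Real.pi/4) with h | h
  · rw [if_pos h]
    have habs := abs_le.mp h
    have e : fA (Complex.arg z) = Complex.arg z := by
      unfold fA
      rw [max_eq_right (by linarith), min_eq_right (by linarith)]; ring
    rw [e]
    rcases eq_or_ne z 0 with rfl | hz
    · simp
    · rw [mul_comm Complex.I]; exact (Complex.norm_mul_exp_arg_mul_I z).symm
  · rw [if_neg (not_le.mpr h)]
    rcases lt_or_ge 0 (Complex.arg z) with h0 | h0
    · rw [if_pos h0]
      have h4 : Real.pi/4 < Complex.arg z := by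
        rw [abs_of_pos h0] at h; exact h
      have e : fA (Complex.arg z) = 3 * Complex.arg z - Real.pi/2 := by
        unfold fA
        rw [max_eq_left (by linarith), min_eq_right (by linarith)]; ring
      rw [e]
    · rw [if_neg (not_lt.mpr h0)]
      have h4 : Complex.arg z < -(Real.pi/4) := by
        rw [abs_of_nonpos h0] at h; linarith
      have e : fA (Complex.arg z) = 3 * Complex.arg z + Real.pi/2 := by
        unfold fA
        rw [max_eq_right (by linarith), min_eq_left (by linarith)]; ring
      rw [e]

lemma polar_abs (r : ℝ) (hr : 0 ≤ r) (θ : ℝ) :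
    ‖(r : ℂ) * Complex.exp (Complex.I * (θ : ℂ))‖ = r := by
  rw [norm_mul, mul_comm Complex.I, Complex.norm_exp_ofReal_mul_I, mul_one,
    Complex.norm_real, Real.norm_eq_abs, _root_.abs_of_nonneg hr]

lemma polar_arg (r : ℝ) (hr : 0 < r) {θ : ℝ} (hθ : θ ∈ Set.Ioc (-Real.pi) Real.pi) :
    Complex.arg ((r : ℂ) * Complex.exp (Complex.I * (θ : ℂ))) = θ := by
  rw [Complex.arg_real_mul _ hr, mul_comm Complex.I, Complex.exp_mul_I,
    Complex.arg_cos_add_sin_mul_I hθ]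

lemma abs_Nmap (z : ℂ) : ‖(Nmap z)‖ = ‖z‖ :=
  polar_abs _ (norm_nonneg _) _

lemma abs_Mmap (w : ℂ) : ‖(Mmap w)‖ = ‖w‖ :=
  polar_abs _ (norm_nonneg _) _

lemma arg_Nmap {z : ℂ} (hz : z ≠ 0) (h : |Complex.arg z| < Real.pi/2) :
    Complex.arg (Nmap z) = fA (Complex.arg z) := by
  have hmem := fA_mem (abs_lt.mp h)
  exact polar_arg _ (norm_pos_iff.mpr hz) ⟨hmem.1, hmem.2.le⟩

lemma arg_Mmap {w : ℂ} (hw : w ≠ 0) (h : Complex.arg w ≠ Real.pi) :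
    Complex.arg (Mmap w) = gA (Complex.arg w) := by
  have hπ := Real.pi_pos
  have h0 := Complex.arg_mem_Ioc w
  have hmem := gA_mem (t := Complex.arg w) ⟨h0.1, lt_of_le_of_ne h0.2 h⟩
  exact polar_arg _ (norm_pos_iff.mpr hw) ⟨by linarith [hmem.1], by linarith [hmem.2]⟩

lemma Mmap_Nmap {z : ℂ} (hz : 0 < z.re) : Mmap (Nmap z) = z := by
  have hz0 : z ≠ 0 := by intro h; rw [h] at hz; simp at hz
  have harg : |Complex.arg z| < Real.pi/2 := Complex.abs_arg_lt_pi_div_two_iff.mpr (Or.inl hz)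
  unfold Mmap
  rw [abs_Nmap, arg_Nmap hz0 harg, gA_fA, mul_comm Complex.I]
  exact Complex.norm_mul_exp_arg_mul_I z

lemma Nmap_Mmap {w : ℂ} (hw : w ≠ 0) (hπ : Complex.arg w ≠ Real.pi) : Nmap (Mmap w) = w := by
  have hM0 : Mmap w ≠ 0 := by
    intro h
    have := abs_Mmap w
    rw [h, norm_zero] at this
    exact hw (norm_eq_zero.mp this.symm)
  have h0 := Complex.arg_mem_Ioc w
  have hmem := gA_mem (t := Complex.arg w) ⟨h0.1, lt_of_le_of_ne h0.2 hπ⟩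
  have hMarg : |Complex.arg (Mmap w)| < Real.pi/2 := by
    rw [arg_Mmap hw hπ, abs_lt]; exact ⟨by linarith [hmem.1], hmem.2⟩
  unfold Nmap
  rw [abs_Mmap, arg_Mmap hw hπ, fA_gA, mul_comm Complex.I]
  exact Complex.norm_mul_exp_arg_mul_I w

/-! ### Properties of μ -/

lemma mu_sub_one {z : ℂ} (hz : z ≠ 1) : mu z - 1 = 2 / (z - 1) := by
  have h : z - 1 ≠ 0 := sub_ne_zero.mpr hz
  unfold mu; field_simp; ring

lemma mu_add_one {z : ℂ} (hz : z ≠ 1) : mu z + 1 = 2 * z / (z - 1) := by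
  have h : z - 1 ≠ 0 := sub_ne_zero.mpr hz
  unfold mu; field_simp; ring

lemma mu_ne_one {z : ℂ} (hz : z ≠ 1) : mu z ≠ 1 := by
  intro h
  have := mu_sub_one hz
  rw [h, sub_self] at this
  have h2 : z - 1 ≠ 0 := sub_ne_zero.mpr hz
  exact two_ne_zero (by field_simp at this; simpa using this.symm)

lemma mu_mu {z : ℂ} (hz : z ≠ 1) : mu (mu z) = z := by
  have h : z - 1 ≠ 0 := sub_ne_zero.mpr hz
  have h2 : mu z - 1 ≠ 0 := sub_ne_zero.mpr (mu_ne_one hz)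
  conv_lhs => rw [mu, mu_add_one hz, mu_sub_one hz]
  field_simp

lemma mu_re (z : ℂ) : (mu z).re = (Complex.normSq z - 1) / Complex.normSq (z - 1) := by
  simp only [mu, Complex.div_re, Complex.add_re, Complex.add_im, Complex.sub_re,
    Complex.sub_im, Complex.one_re, Complex.one_im, Complex.normSq_apply]
  ring

lemma mu_im (z : ℂ) : (mu z).im = -2 * z.im / Complex.normSq (z - 1) := by
  simp only [mu, Complex.div_im, Complex.add_re, Complex.add_im, Complex.sub_re,
    Complex.sub_im, Complex.one_re, Complex.one_im, Complex.normSq_apply]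
  ring

lemma ne_one_of_abs {z : ℂ} (hz : 1 < ‖z‖) : z ≠ 1 := by
  intro h; rw [h] at hz; simp at hz

lemma normSq_sub_one_pos {z : ℂ} (hz : z ≠ 1) : 0 < Complex.normSq (z - 1) := by
  rw [Complex.normSq_pos]; exact sub_ne_zero.mpr hz

lemma mu_re_pos {z : ℂ} (hz : 1 < ‖z‖) : 0 < (mu z).re := by
  rw [mu_re]
  apply div_pos _ (normSq_sub_one_pos (ne_one_of_abs hz))
  have : 1 < Complex.normSq z := by
    rw [← Complex.sq_norm]; nlinarith
  linarith

lemma abs_mu_gt {w : ℂ} (hw : 0 < w.re) (h1 : w ≠ 1) : 1 < ‖(mu w)‖ := by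
  rw [mu, norm_div]
  rw [lt_div_iff₀ (norm_pos_iff.mpr (sub_ne_zero.mpr h1))]
  rw [one_mul]
  have hsq : (‖(w - 1)‖)^2 < (‖(w + 1)‖)^2 := by
    rw [Complex.sq_norm, Complex.sq_norm, Complex.normSq_apply, Complex.normSq_apply]
    simp only [Complex.sub_re, Complex.sub_im, Complex.add_re, Complex.add_im,
      Complex.one_re, Complex.one_im]
    nlinarith
  exact lt_of_pow_lt_pow_left₀ 2 (norm_nonneg _) hsq

lemma mu_im_eq_zero_iff {z : ℂ} (hz : z ≠ 1) : (mu z).im = 0 ↔ z.im = 0 := by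
  rw [mu_im, div_eq_zero_iff]
  have := (normSq_sub_one_pos hz).ne'
  constructor
  · rintro (h | h)
    · linarith [h]
    · exact absurd h this
  · intro h; left; rw [h]; ring

lemma mu_ofReal {t : ℝ} (ht : t ≠ 1) : mu (t : ℂ) = (((t+1)/(t-1) : ℝ) : ℂ) := by
  unfold mu; push_cast; ring

lemma realA {t : ℝ} (ht : t ≠ 1) :
    ((-1:ℝ) ≤ (t+1)/(t-1) ∧ (t+1)/(t-1) ≤ 1) ↔ t ≤ 0 := by
  rcases lt_or_gt_of_ne ht with h | h
  · have hd : t - 1 < 0 := by linarith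
    rw [le_div_iff_of_neg hd, div_le_iff_of_neg hd]
    constructor
    · rintro ⟨h1, h2⟩; linarith
    · intro h1; constructor <;> linarith
  · have hd : (0:ℝ) < t - 1 := by linarith
    rw [le_div_iff₀ hd, div_le_iff₀ hd]
    constructor
    · rintro ⟨h1, h2⟩; linarith
    · intro h1; linarith

lemma realB {t : ℝ} (ht : t ≠ 1) : (t+1)/(t-1) ≤ 0 ↔ (-1 ≤ t ∧ t < 1) := by
  rcases lt_or_gt_of_ne ht with h | h
  · have hd : t - 1 < 0 := by linarith
    rw [div_nonpos_iff]
    constructor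
    · rintro (⟨h1, h2⟩ | ⟨h1, h2⟩) <;> constructor <;> linarith
    · rintro ⟨h1, h2⟩; left; exact ⟨by linarith, by linarith⟩
  · constructor
    · intro hle
      have : (0:ℝ) < (t+1)/(t-1) := div_pos (by linarith) (by linarith)
      linarith
    · rintro ⟨_, h2⟩; linarith

/-! ### Mapping facts -/

lemma not_nonpos_real {z : ℂ} (h0 : z ≠ 0) (hπ : Complex.arg z ≠ Real.pi) :
    ¬(z.im = 0 ∧ z.re ≤ 0) := by
  rintro ⟨h1, h2⟩
  rcases lt_or_eq_of_le h2 with h3 | h3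
  · exact hπ (Complex.arg_eq_pi_iff.mpr ⟨h3, h1⟩)
  · exact h0 (Complex.ext (by simpa using h3) (by simpa using h1))

lemma nmap_facts {w : ℂ} (hw : 0 < w.re) (h1 : w ≠ 1) :
    Nmap w ≠ 0 ∧ Complex.arg (Nmap w) ≠ Real.pi ∧ Nmap w ≠ 1 := by
  have hw0 : w ≠ 0 := by intro h; rw [h] at hw; simp at hw
  have harg : |Complex.arg w| < Real.pi/2 := Complex.abs_arg_lt_pi_div_two_iff.mpr (Or.inl hw)
  have hNa : Complex.arg (Nmap w) = fA (Complex.arg w) := arg_Nmap hw0 harg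
  have hmem : fA (Complex.arg w) ∈ Ioo (-Real.pi) Real.pi := fA_mem (abs_lt.mp harg)
  refine ⟨?_, ?_, ?_⟩
  · intro h
    have := abs_Nmap w
    rw [h, norm_zero] at this
    exact hw0 (norm_eq_zero.mp this.symm)
  · rw [hNa]; exact hmem.2.ne
  · intro h
    have habs : ‖w‖ = 1 := by rw [← abs_Nmap w, h, norm_one]
    have harg0 : fA (Complex.arg w) = 0 := by rw [← hNa, h, Complex.arg_one]
    have hargw : Complex.arg w = 0 := by
      have := gA_fA (Complex.arg w)
      rw [harg0, gA_zero] at this; exact this.symm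
    apply h1
    rw [← Complex.norm_mul_exp_arg_mul_I w, habs, hargw]
    simp

lemma sigma_eq (z : ℂ) : sigmaMap z = mu (Nmap (mu z)) := by
  rw [sigmaMap, nuMap_eq_Nmap]

lemma sigma_mem {z : ℂ} (hz : 1 < ‖z‖) :
    ¬((sigmaMap z).im = 0 ∧ -1 ≤ (sigmaMap z).re ∧ (sigmaMap z).re ≤ 1) := by
  have hz1 := ne_one_of_abs hz
  obtain ⟨hu0, huπ, hu1⟩ := nmap_facts (mu_re_pos hz) (mu_ne_one hz1)
  have hnot := not_nonpos_real hu0 huπ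
  rw [sigma_eq]
  set u := Nmap (mu z) with hu
  rintro ⟨h1, h2, h3⟩
  have him : u.im = 0 := (mu_im_eq_zero_iff hu1).mp h1
  set t := u.re with htdef
  have hue : u = (t : ℂ) := Complex.ext rfl him
  have ht : t ≠ 1 := by
    intro h; apply hu1; rw [hue, h]; simp
  rw [hue, mu_ofReal ht, Complex.ofReal_re] at h2 h3
  exact hnot ⟨him, (realA ht).mp ⟨h2, h3⟩⟩

noncomputable def tauMap (w : ℂ) : ℂ := mu (Mmap (mu w))

lemma tau_facts {w : ℂ} (hw : ¬(w.im = 0 ∧ -1 ≤ w.re ∧ w.re ≤ 1)) :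
    w ≠ 1 ∧ mu w ≠ 0 ∧ Complex.arg (mu w) ≠ Real.pi ∧
      0 < (Mmap (mu w)).re ∧ Mmap (mu w) ≠ 1 := by
  have hw1 : w ≠ 1 := by
    intro h; apply hw; rw [h]; norm_num
  have hwm1 : w ≠ -1 := by
    intro h; apply hw; rw [h]; norm_num
  have hmu1 : mu w ≠ 1 := mu_ne_one hw1
  have hmu0 : mu w ≠ 0 := by
    intro h
    rw [mu, div_eq_zero_iff] at h
    rcases h with h | h
    · exact hwm1 (by linear_combination h)
    · exact hw1 (by linear_combination h)
  have hnot : ¬((mu w).im = 0 ∧ (mu w).re ≤ 0) := by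
    rintro ⟨h1, h2⟩
    have him : w.im = 0 := (mu_im_eq_zero_iff hw1).mp h1
    set t := w.re with htdef
    have hwe : w = (t : ℂ) := Complex.ext rfl him
    have ht : t ≠ 1 := by
      intro h; apply hw1; rw [hwe, h]; simp
    rw [hwe, mu_ofReal ht, Complex.ofReal_re] at h2
    obtain ⟨hb1, hb2⟩ := (realB ht).mp h2
    exact hw ⟨him, hb1, hb2.le⟩
  have hπ' : Complex.arg (mu w) ≠ Real.pi := by
    intro h
    obtain ⟨h1, h2⟩ := Complex.arg_eq_pi_iff.mp h
    exact hnot ⟨h2, h1.le⟩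
  have hM0 : Mmap (mu w) ≠ 0 := by
    intro h
    have := abs_Mmap (mu w)
    rw [h, norm_zero] at this
    exact hmu0 (norm_eq_zero.mp this.symm)
  have h0 := Complex.arg_mem_Ioc (mu w)
  have hmem := gA_mem (t := Complex.arg (mu w)) ⟨h0.1, lt_of_le_of_ne h0.2 hπ'⟩
  have hMarg : |Complex.arg (Mmap (mu w))| < Real.pi/2 := by
    rw [arg_Mmap hmu0 hπ', abs_lt]; exact ⟨by linarith [hmem.1], hmem.2⟩
  have hMre : 0 < (Mmap (mu w)).re := by
    rcases Complex.abs_arg_lt_pi_div_two_iff.mp hMarg with h | h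
    · exact h
    · exact absurd h hM0
  refine ⟨hw1, hmu0, hπ', hMre, ?_⟩
  intro h
  have habs : ‖(mu w)‖ = 1 := by rw [← abs_Mmap (mu w), h, norm_one]
  have harg0 : gA (Complex.arg (mu w)) = 0 := by
    rw [← arg_Mmap hmu0 hπ', h, Complex.arg_one]
  have hargw : Complex.arg (mu w) = 0 := by
    have := fA_gA (Complex.arg (mu w))
    rw [harg0, fA_zero] at this; exact this.symm
  apply hmu1
  rw [← Complex.norm_mul_exp_arg_mul_I (mu w), habs, hargw]
  simp

lemma tau_mem {w : ℂ} (hw : ¬(w.im = 0 ∧ -1 ≤ w.re ∧ w.re ≤ 1)) :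
    1 < ‖(tauMap w)‖ := by
  obtain ⟨hw1, hmu0, hπ', hMre, hM1⟩ := tau_facts hw
  exact abs_mu_gt hMre hM1

lemma tau_sigma {z : ℂ} (hz : 1 < ‖z‖) : tauMap (sigmaMap z) = z := by
  have hz1 := ne_one_of_abs hz
  obtain ⟨hu0, huπ, hu1⟩ := nmap_facts (mu_re_pos hz) (mu_ne_one hz1)
  rw [sigma_eq, tauMap, mu_mu hu1, Mmap_Nmap (mu_re_pos hz), mu_mu hz1]

lemma sigma_tau {w : ℂ} (hw : ¬(w.im = 0 ∧ -1 ≤ w.re ∧ w.re ≤ 1)) :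
    sigmaMap (tauMap w) = w := by
  obtain ⟨hw1, hmu0, hπ', hMre, hM1⟩ := tau_facts hw
  rw [sigma_eq, tauMap, mu_mu hM1, Nmap_Mmap hmu0 hπ', mu_mu hw1]

/-! ### Continuity -/

lemma contAt_mu {z : ℂ} (h : z ≠ 1) : ContinuousAt mu z := by
  have : ContinuousAt (fun z : ℂ => (z + 1) / (z - 1)) z :=
    ContinuousAt.div (by fun_prop) (by fun_prop) (sub_ne_zero.mpr h)
  exact this

lemma contAt_Nmap {z : ℂ} (h : z ∈ Complex.slitPlane) : ContinuousAt Nmap z := by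
  have ha : ContinuousAt Complex.arg z := Complex.continuousAt_arg h
  have h1 : ContinuousAt (fun z : ℂ => ((fA (Complex.arg z) : ℝ) : ℂ)) z :=
    Complex.continuous_ofReal.continuousAt.comp ((fA_cont.continuousAt).comp ha)
  exact ((Complex.continuous_ofReal.comp continuous_norm).continuousAt).mul
    ((continuousAt_const.mul h1).cexp)

lemma contAt_Mmap {z : ℂ} (h : z ∈ Complex.slitPlane) : ContinuousAt Mmap z := by
  have ha : ContinuousAt Complex.arg z := Complex.continuousAt_arg h
  have h1 : ContinuousAt (fun z : ℂ => ((gA (Complex.arg z) : ℝ) : ℂ)) z :=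
    Complex.continuous_ofReal.continuousAt.comp ((gA_cont.continuousAt).comp ha)
  exact ((Complex.continuous_ofReal.comp continuous_norm).continuousAt).mul
    ((continuousAt_const.mul h1).cexp)

lemma contAt_sigma {z : ℂ} (hz : 1 < ‖z‖) : ContinuousAt sigmaMap z := by
  have hz1 := ne_one_of_abs hz
  obtain ⟨hu0, huπ, hu1⟩ := nmap_facts (mu_re_pos hz) (mu_ne_one hz1)
  have hs : sigmaMap = fun z => mu (Nmap (mu z)) := funext sigma_eq
  rw [hs]
  have hslit : mu z ∈ Complex.slitPlane := Complex.mem_slitPlane_iff.mpr (Or.inl (mu_re_pos hz))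
  exact ((contAt_mu hu1).comp (contAt_Nmap hslit)).comp (contAt_mu hz1)

lemma contAt_tau {w : ℂ} (hw : ¬(w.im = 0 ∧ -1 ≤ w.re ∧ w.re ≤ 1)) :
    ContinuousAt tauMap w := by
  obtain ⟨hw1, hmu0, hπ', hMre, hM1⟩ := tau_facts hw
  have hslit : mu w ∈ Complex.slitPlane := by
    rw [Complex.mem_slitPlane_iff]
    by_contra h
    push_neg at h
    rcases lt_or_eq_of_le h.1 with h3 | h3
    · exact hπ' (Complex.arg_eq_pi_iff.mpr ⟨h3, h.2⟩)
    · exact hmu0 (Complex.ext (by simpa using h3) (by simpa using h.2))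
  exact ((contAt_mu hM1).comp (contAt_Mmap hslit)).comp (contAt_mu hw1)

/-- `σ := μ ∘ ν ∘ μ` is a homeomorphism from `{|z| > 1}` onto
`ℂ \ [−1, 1]`, the complement of the closed real segment `[−1,1]` in `ℂ`. -/
theorem sigma_homeomorphism_onto_complement_of_segment :
    ∃ e : {z : ℂ | 1 < ‖z‖} ≃ₜ
        {w : ℂ | ¬(w.im = 0 ∧ -1 ≤ w.re ∧ w.re ≤ 1)},
      ∀ z : {z : ℂ | 1 < ‖z‖}, (e z : ℂ) = sigmaMap (z : ℂ) := by
  refine ⟨{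
    toFun := fun z => ⟨sigmaMap z, sigma_mem z.2⟩
    invFun := fun w => ⟨tauMap w, tau_mem w.2⟩
    left_inv := fun z => Subtype.ext (tau_sigma z.2)
    right_inv := fun w => Subtype.ext (sigma_tau w.2)
    continuous_toFun := ?_
    continuous_invFun := ?_ }, fun z => rfl⟩
  · apply Continuous.subtype_mk
    rw [continuous_iff_continuousAt]
    exact fun z => (contAt_sigma z.2).comp continuous_subtype_val.continuousAt
  · apply Continuous.subtype_mk
    rw [continuous_iff_continuousAt]
    exact fun w => (contAt_tau w.2).comp continuous_subtype_val.continuousAt
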